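/- arXiv:1502.05610 — 2 statements merged into one kernel-verified Lean document; each statement's English description precedes it below -/
import Mathlib

section
/- Let μ be a shift-invariant measure on Σ = I^ℤ and for x ∈ supp(μ) define g_n(x) = μ([x_{−n},…,x_{−1}]_{−n}^{−1}) / μ([x_{−n},…,x_{−2}]_{−n}^{−2}) (and g_n(x) = 0 off supp(μ)). Then the limit g(x) = lim_{n→∞} g_n(x) exists for μ-almost every x ∈ Σ, and g ∈ L¹(Σ, μ). -/
open MeasureTheory Filter Topology
open scoped ENNReal

/-- Two-sided cylinder: bi-infinite sequences agreeing with `x` in coordinates `a, …, b`. -/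
def cylZ {I : Type*} (x : ℤ → I) (a b : ℤ) : Set (ℤ → I) :=
  {y | ∀ t : ℤ, a ≤ t → t ≤ b → y t = x t}

/-- The (invertible) left shift on the two-sided shift space. -/
def shiftZ {I : Type*} (z : ℤ → I) : ℤ → I := fun t => z (t + 1)

/-- `g_n(x) = μ([x_{-n},…,x_{-1}]) / μ([x_{-n},…,x_{-2}])`; by the convention
`0 / 0 = 0` this vanishes off the support of `μ`. -/
noncomputable def gseq {I : Type*} [MeasurableSpace I]
    (μ : Measure (ℤ → I)) (n : ℕ) (x : ℤ → I) : ℝ :=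
  (μ (cylZ x (-(n : ℤ)) (-1))).toReal / (μ (cylZ x (-(n : ℤ)) (-2))).toReal

/-!
For `n ≥ 1`, `g_n(x)` is the conditional probability that the symbol at `-1` lies in the
measurable atom of `x_{-1}`, given the coordinates in `[-n, -2]`. The window σ-algebra is the
pullback of a σ-algebra on a countable space, so its conditional expectations are averages over
the preimages of atoms. Lévy's upward theorem then gives a.e. convergence to the conditional
probability given the whole past, a bounded measurable function.

The alphabet carries an arbitrary σ-algebra, so cylinders need not be measurable and `μ` measures
them from outside; since no measurable set separates points lying in the same product atom, a
cylinder has the measure of its saturation by atoms.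
-/

section MeasurableAtom

variable {α β : Type*}

theorem Measurable.mem_measurableAtom {_ : MeasurableSpace α} [MeasurableSpace β] {f : α → β}
    (hf : Measurable f) {x y : α} (h : y ∈ measurableAtom x) :
    f y ∈ measurableAtom (f x) := by
  simp only [measurableAtom, Set.mem_iInter]
  exact fun s hxs hs => mem_of_mem_measurableAtom h (hf hs) hxs

theorem mem_measurableAtom_pi_iff {ι : Type*} {X : ι → Type*} [∀ i, MeasurableSpace (X i)]
    {x y : ∀ i, X i} : y ∈ measurableAtom x ↔ ∀ i, y i ∈ measurableAtom (x i) := by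
  refine ⟨fun h i => (measurable_pi_apply i).mem_measurableAtom h, fun h => ?_⟩
  -- The sets that do not separate `x` from `y` form a σ-algebra containing the generators.
  let m : MeasurableSpace (∀ i, X i) :=
    { MeasurableSet' := fun s => x ∈ s ↔ y ∈ s
      measurableSet_empty := Iff.rfl
      measurableSet_compl := fun _ hs => not_congr hs
      measurableSet_iUnion := fun _ hs => by simpa only [Set.mem_iUnion] using exists_congr hs }
  have hpi : MeasurableSpace.pi ≤ m := by
    refine iSup_le fun i => ?_
    rintro _ ⟨B, hB, rfl⟩
    have hxi : x i ∈ measurableAtom (y i) :=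
      measurableAtom_eq_of_mem (h i) ▸ mem_measurableAtom_self _
    exact ⟨mem_of_mem_measurableAtom (h i) hB, mem_of_mem_measurableAtom hxi hB⟩
  simp only [measurableAtom, Set.mem_iInter]
  exact fun s hxs hs => (hpi s hs).1 hxs

theorem measure_biUnion_measurableAtom [MeasurableSpace α] (μ : Measure α) (s : Set α) :
    μ (⋃ x ∈ s, measurableAtom x) = μ s := by
  refine le_antisymm ?_ (measure_mono fun x hx => Set.mem_biUnion hx (mem_measurableAtom_self x))
  calc μ (⋃ x ∈ s, measurableAtom x) ≤ μ (toMeasurable μ s) :=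
        measure_mono <| Set.iUnion₂_subset fun x hx =>
          measurableAtom_subset (measurableSet_toMeasurable μ s) (subset_toMeasurable μ s hx)
    _ = μ s := measure_toMeasurable s

theorem ae_measure_preimage_measurableAtom_ne_zero [MeasurableSpace α] [MeasurableSpace β]
    [Countable β] (μ : Measure α) (f : α → β) :
    ∀ᵐ x ∂μ, μ (f ⁻¹' measurableAtom (f x)) ≠ 0 := by
  have h : ∀ b : β, ∀ᵐ x ∂μ, f x ∈ measurableAtom b → μ (f ⁻¹' measurableAtom b) ≠ 0 := by
    intro b
    by_cases hb : μ (f ⁻¹' measurableAtom b) = 0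
    · filter_upwards [measure_eq_zero_iff_ae_notMem.1 hb] with x hx h using absurd h hx
    · exact ae_of_all μ fun _ _ => hb
  filter_upwards [ae_all_iff.2 h] with x hx
  exact hx (f x) (mem_measurableAtom_self _)

theorem condExp_comap_apply_eq_setAverage {m₀ : MeasurableSpace α} [mβ : MeasurableSpace β]
    [Countable β] {μ : Measure α} [IsFiniteMeasure μ] {f : α → β} (hf : Measurable f)
    {g : α → ℝ} (hg : Integrable g μ) {x : α} (hx : μ (f ⁻¹' measurableAtom (f x)) ≠ 0) :
    μ[g | mβ.comap f] x = ⨍ y in f ⁻¹' measurableAtom (f x), g y ∂μ := by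
  set A := f ⁻¹' measurableAtom (f x)
  have hA : MeasurableSet[mβ.comap f] A := ⟨_, .measurableAtom_of_countable _, rfl⟩
  -- A function measurable for `mβ.comap f` is constant on the preimages of atoms of `β`.
  have hconst : Set.EqOn μ[g | mβ.comap f] (fun _ => μ[g | mβ.comap f] x) A := by
    intro y hy
    obtain ⟨B, hB, hpre⟩ :=
      (stronglyMeasurable_condExp (m := mβ.comap f) (μ := μ) (f := g)).measurable
        (measurableSet_singleton (μ[g | mβ.comap f] x))
    have hyB : y ∈ f ⁻¹' B := mem_of_mem_measurableAtom hy hB (show x ∈ f ⁻¹' B from hpre ▸ rfl)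
    rw [hpre] at hyB
    exact hyB
  have hμA : μ.real A ≠ 0 := (measureReal_ne_zero_iff (measure_ne_top μ A)).2 hx
  rw [setAverage_eq, ← setIntegral_condExp hf.comap_le hg hA,
    setIntegral_congr_fun (hf.comap_le _ hA) hconst, setIntegral_const, smul_eq_mul,
    smul_eq_mul, inv_mul_cancel_left₀ hμA]

theorem ae_condExp_comap_eq_setAverage {m₀ : MeasurableSpace α} [mβ : MeasurableSpace β]
    [Countable β] {μ : Measure α} [IsFiniteMeasure μ] {f : α → β} (hf : Measurable f)
    {g : α → ℝ} (hg : Integrable g μ) :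
    ∀ᵐ x ∂μ, μ[g | mβ.comap f] x = ⨍ y in f ⁻¹' measurableAtom (f x), g y ∂μ :=
  (ae_measure_preimage_measurableAtom_ne_zero μ f).mono fun _ hx =>
    condExp_comap_apply_eq_setAverage hf hg hx

theorem measurable_family_apply_of_countable [MeasurableSpace α] [MeasurableSpace β]
    {γ : Type*} [MeasurableSpace γ] [Countable β] {L : β → α → γ} (hL : ∀ b, Measurable (L b))
    (hatom : ∀ b b', b' ∈ measurableAtom b → L b' = L b) {φ : α → β} (hφ : Measurable φ) :
    Measurable fun x => L (φ x) x :=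
  (measurable_from_prod_countable_right' (f := fun p : β × α => L p.1 p.2) hL
    fun b b' x h => by rw [hatom b b' h]).comp (hφ.prodMk measurable_id)

theorem measure_pi_singleton_eq_measure_pi_measurableAtom {ι : Type*} {X : ι → Type*}
    [∀ i, MeasurableSpace (X i)] (μ : Measure (∀ i, X i)) (s : Set ι) (x : ∀ i, X i) :
    μ (s.pi fun i => {x i}) = μ (s.pi fun i => measurableAtom (x i)) := by
  refine le_antisymm (measure_mono (Set.pi_mono fun i _ => by simp)) ?_
  classical
  rw [← measure_biUnion_measurableAtom μ (s.pi fun i => {x i})]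
  refine measure_mono fun y hy => Set.mem_biUnion (x := s.piecewise x y)
    (fun i hi => Set.piecewise_eq_of_mem _ _ _ hi) ?_
  refine mem_measurableAtom_pi_iff.2 fun i => ?_
  by_cases hi : i ∈ s
  · simpa [hi] using hy i hi
  · simp [hi]

theorem preimage_restrict_measurableAtom {ι : Type*} {X : ι → Type*}
    [∀ i, MeasurableSpace (X i)] (s : Finset ι) (x : ∀ i, X i) :
    s.restrict ⁻¹' measurableAtom (s.restrict x) =
      (s : Set ι).pi fun i => measurableAtom (x i) := by
  ext y
  simp [mem_measurableAtom_pi_iff]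

end MeasurableAtom

section ShiftSpace

variable {I : Type*}

theorem cylZ_eq_pi (x : ℤ → I) (a b : ℤ) : cylZ x a b = (Set.Icc a b).pi fun t => {x t} := by
  ext y
  simp [cylZ, Set.mem_pi]

variable [MeasurableSpace I]

def coordAtom (t : ℤ) (i : I) : Set (ℤ → I) := (fun y => y t) ⁻¹' measurableAtom i

theorem coordAtom_eq_of_mem {t : ℤ} {i j : I} (h : j ∈ measurableAtom i) :
    coordAtom t j = coordAtom t i := by
  rw [coordAtom, measurableAtom_eq_of_mem h, coordAtom]

theorem measurableSet_coordAtom [Countable I] (t : ℤ) (i : I) : MeasurableSet (coordAtom t i) :=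
  measurable_pi_apply t (.measurableAtom_of_countable i)

variable (I) in
noncomputable def pastFiltration :
    Filtration ℕ (MeasurableSpace.pi : MeasurableSpace (ℤ → I)) where
  seq n := Filtration.piFinset (Finset.Icc (-(n : ℤ)) (-2))
  mono' _ _ h := Filtration.mono _ (Finset.Icc_subset_Icc (by omega) le_rfl)
  le' _ := Filtration.le _ _

theorem gseq_mem_Icc (μ : Measure (ℤ → I)) [IsFiniteMeasure μ] (n : ℕ) (x : ℤ → I) :
    gseq μ n x ∈ Set.Icc 0 1 := by
  refine ⟨div_nonneg ENNReal.toReal_nonneg ENNReal.toReal_nonneg,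
    div_le_one_of_le₀ (measureReal_mono fun y hy t h1 h2 => hy t h1 (by omega))
      ENNReal.toReal_nonneg⟩

theorem gseq_eq_setAverage [Countable I] (μ : Measure (ℤ → I)) {n : ℕ} (hn : 1 ≤ n)
    (x : ℤ → I) :
    gseq μ n x = ⨍ y in (Finset.Icc (-(n : ℤ)) (-2)).restrict ⁻¹'
      measurableAtom ((Finset.Icc (-(n : ℤ)) (-2)).restrict x),
        (coordAtom (-1) (x (-1))).indicator 1 y ∂μ := by
  have hwindow : Set.Icc (-(n : ℤ)) (-1) = insert (-1) (Set.Icc (-(n : ℤ)) (-2)) := by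
    ext t; simp only [Set.mem_Icc, Set.mem_insert_iff]; omega
  rw [preimage_restrict_measurableAtom (X := fun _ => I), setAverage_eq, integral_indicator_one,
    measureReal_restrict_apply, gseq, cylZ_eq_pi, cylZ_eq_pi,
    measure_pi_singleton_eq_measure_pi_measurableAtom,
    measure_pi_singleton_eq_measure_pi_measurableAtom, hwindow, Set.insert_pi]
  · rw [Finset.coe_Icc, smul_eq_mul, inv_mul_eq_div]
    rfl
  all_goals exact measurableSet_coordAtom _ _

theorem ae_gseq_eq_condExp [Countable I] (μ : Measure (ℤ → I)) [IsFiniteMeasure μ] :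
    ∀ᵐ x ∂μ, ∀ n, 1 ≤ n →
      gseq μ n x = μ[(coordAtom (-1) (x (-1))).indicator 1 | pastFiltration I n] x := by
  have h (n : ℕ) (i : I) : ∀ᵐ x ∂μ,
      μ[(coordAtom (-1) i).indicator 1 | pastFiltration I n] x =
        ⨍ y in (Finset.Icc (-(n : ℤ)) (-2)).restrict ⁻¹'
          measurableAtom ((Finset.Icc (-(n : ℤ)) (-2)).restrict x),
            (coordAtom (-1) i).indicator 1 y ∂μ :=
    ae_condExp_comap_eq_setAverage (Finset.measurable_restrict _)
      ((integrable_const 1).indicator (measurableSet_coordAtom _ _))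
  filter_upwards [ae_all_iff.2 fun n => ae_all_iff.2 (h n)] with x hx n hn
  rw [hx n (x (-1)), gseq_eq_setAverage μ hn]

end ShiftSpace

theorem reverse_jacobian_exists_general
    {I : Type*} [Fintype I] [MeasurableSpace I]
    (μ : Measure (ℤ → I)) [IsProbabilityMeasure μ] :
    ∃ g : (ℤ → I) → ℝ, Integrable g μ ∧
      ∀ᵐ x ∂μ, Tendsto (fun n => gseq μ n x) atTop (𝓝 (g x)) := by
  set L : I → (ℤ → I) → ℝ :=
    fun i => μ[(coordAtom (-1) i).indicator 1 | ⨆ n, pastFiltration I n] with hL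
  have hlim : ∀ᵐ x ∂μ, Tendsto (fun n => gseq μ n x) atTop (𝓝 (L (x (-1)) x)) := by
    filter_upwards [ae_gseq_eq_condExp μ,
      ae_all_iff.2 fun i =>
        tendsto_ae_condExp (ℱ := pastFiltration I) ((coordAtom (-1) i).indicator 1)]
      with x hg hconv
    exact (hconv (x (-1))).congr' ((eventually_ge_atTop 1).mono fun n hn => (hg n hn).symm)
  have hmeas : Measurable fun x : ℤ → I => L (x (-1)) x :=
    measurable_family_apply_of_countable (L := L)
      (fun i => (stronglyMeasurable_condExp.mono (iSup_le (pastFiltration I).le)).measurable)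
      (fun i j h => by simp only [hL, coordAtom_eq_of_mem h]) (measurable_pi_apply (-1))
  refine ⟨_, Integrable.of_bound hmeas.aestronglyMeasurable 1 ?_, hlim⟩
  filter_upwards [hlim] with x hx
  have hx01 := isClosed_Icc.mem_of_tendsto hx (.of_forall fun n => gseq_mem_Icc μ n x)
  rw [Real.norm_of_nonneg hx01.1]
  exact hx01.2

/-- The reverse Jacobian: the limit `g(x) = lim_n g_n(x)` exists `μ`-a.e. and the
limit function is in `L¹(μ)`. -/
theorem reverse_jacobian_exists
    {I : Type*} [Fintype I] [Nonempty I] [MeasurableSpace I]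
    (μ : Measure (ℤ → I)) [IsProbabilityMeasure μ]
    (hinv : Measure.map shiftZ μ = μ) :
    ∃ g : (ℤ → I) → ℝ, Integrable g μ ∧
      ∀ᵐ x ∂μ, Tendsto (fun n => gseq μ n x) atTop (𝓝 (g x)) :=
  reverse_jacobian_exists_general μ
end

section
/- Let μ be a fully supported Gibbs measure on Σ⁺ for a Hölder potential φ. Then every micromeasure ν of μ (weak-* limit of a sequence of minimeasures μ_{x,n_j}) satisfies C^{−1} μ(A) ≤ ν(A) ≤ C μ(A) for all Borel sets A, with the same constant C = (C₂/C₁²) exp(V(φ)) as for minimeasures; in particular every micromeasure is equivalent to μ. -/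
/-!
Summable variations give bounded distortion: the Birkhoff sums `Sₙφ` at two points that agree
on their first `n` symbols differ by at most `V = ∑ₖ c θᵏ`. Together with the Gibbs
inequalities this makes `μ` quasi-Bernoulli: `μ[x₀…xₙ₋₁y₀…yₘ₋₁]` and
`μ[x₀…xₙ₋₁] μ[y₀…yₘ₋₁]` agree up to the factor `C = (C₂/C₁)² e^V`, which says exactly that
every minimeasure is `C`-comparable to `μ` on cylinders. Cylinders are clopen, so these bounds
survive weak-* limits. Comparability on cylinders extends to all Borel sets, because an open set
is the increasing union of the depth-`n` cylinders it contains and finite measures on the shift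
space are outer regular.
-/

open MeasureTheory Filter Topology
open scoped ENNReal

/-- One-sided cylinder: sequences agreeing with `x` in coordinates `0, …, n-1`. -/
def cyl {I : Type*} (x : ℕ → I) (n : ℕ) : Set (ℕ → I) := {y | ∀ i < n, y i = x i}

/-- The map `T_{n,x}` prepending the first `n` symbols of `x`. -/
def prepend {I : Type*} (x : ℕ → I) (n : ℕ) (y : ℕ → I) : ℕ → I :=
  fun i => if i < n then x i else y (i - n)

/-- The left shift on the one-sided shift space. -/
def shift {I : Type*} (z : ℕ → I) : ℕ → I := fun i => z (i + 1)

/-- The minimeasure `μ_{x,n}` of `μ` at `x` of depth `n`, as a measure. -/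
noncomputable def miniM {I : Type*} [MeasurableSpace I]
    (μ : Measure (ℕ → I)) (x : ℕ → I) (n : ℕ) : Measure (ℕ → I) :=
  (μ (cyl x n))⁻¹ • Measure.map (fun z i => z (i + n)) (μ.restrict (cyl x n))

open Classical in
/-- The minimeasure `μ_{x,n}` as a probability measure (junk value `δ_x` in the
degenerate case `μ(cyl x n) = 0`). -/
noncomputable def miniP {I : Type*} [MeasurableSpace I]
    (μ : Measure (ℕ → I)) (x : ℕ → I) (n : ℕ) : ProbabilityMeasure (ℕ → I) :=
  if h : IsProbabilityMeasure (miniM μ x n) then ⟨miniM μ x n, h⟩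
  else ⟨Measure.dirac x, inferInstance⟩

section Cylinders

variable {I : Type*}

theorem shift_iterate_apply (z : ℕ → I) (k i : ℕ) : shift^[k] z i = z (i + k) := by
  induction k generalizing z with
  | zero => rfl
  | succ k ih => rw [Function.iterate_succ_apply, ih, shift, Nat.add_assoc]

theorem prepend_apply_of_lt {x y : ℕ → I} {n i : ℕ} (hi : i < n) : prepend x n y i = x i :=
  if_pos hi

theorem shift_iterate_prepend (x y : ℕ → I) (n : ℕ) : shift^[n] (prepend x n y) = y := by
  funext i
  rw [shift_iterate_apply, prepend, if_neg (by omega), Nat.add_sub_cancel]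

theorem mem_cyl_self (x : ℕ → I) (n : ℕ) : x ∈ cyl x n := fun _ _ => rfl

theorem cyl_subset_cyl (x : ℕ → I) {n m : ℕ} (h : n ≤ m) : cyl x m ⊆ cyl x n :=
  fun _ hz i hi => hz i (hi.trans_le h)

theorem cyl_congr {x y : ℕ → I} {n : ℕ} (h : ∀ i < n, x i = y i) : cyl x n = cyl y n := by
  ext z
  exact forall₂_congr fun i hi => by rw [h i hi]

theorem cyl_prepend (x y : ℕ → I) (n : ℕ) : cyl (prepend x n y) n = cyl x n :=
  cyl_congr fun _ hi => prepend_apply_of_lt hi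

theorem cyl_add (x : ℕ → I) (n m : ℕ) :
    cyl x (n + m) = cyl x n ∩ shift^[n] ⁻¹' cyl (shift^[n] x) m := by
  ext z
  simp only [cyl, Set.mem_inter_iff, Set.mem_preimage, Set.mem_ofPred_eq, shift_iterate_apply]
  refine ⟨fun h => ⟨fun i hi => h i (by omega), fun i hi => h _ (by omega)⟩,
    fun ⟨h₁, h₂⟩ i hi => ?_⟩
  rcases lt_or_ge i n with hin | hin
  · exact h₁ i hin
  · simpa [Nat.sub_add_cancel hin] using h₂ (i - n) (by omega)

theorem image_prepend (x : ℕ → I) (n : ℕ) (A : Set (ℕ → I)) :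
    prepend x n '' A = cyl x n ∩ shift^[n] ⁻¹' A := by
  ext z
  constructor
  · rintro ⟨y, hy, rfl⟩
    exact ⟨fun i hi => prepend_apply_of_lt hi, by rwa [Set.mem_preimage, shift_iterate_prepend]⟩
  · rintro ⟨hz, hA⟩
    refine ⟨shift^[n] z, hA, funext fun i => ?_⟩
    rcases lt_or_ge i n with hin | hin
    · rw [prepend_apply_of_lt hin, hz i hin]
    · rw [prepend, if_neg (by omega), shift_iterate_apply, Nat.sub_add_cancel hin]

theorem image_prepend_cyl (x y : ℕ → I) (n m : ℕ) :
    prepend x n '' cyl y m = cyl (prepend x n y) (n + m) := by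
  rw [image_prepend, cyl_add, cyl_prepend, shift_iterate_prepend]

theorem cyl_eq_preimage (x : ℕ → I) (n : ℕ) :
    cyl x n = (fun z (i : Fin n) => z i) ⁻¹' {fun (i : Fin n) => x i} := by
  ext z
  simp [cyl, funext_iff, Fin.forall_iff]

theorem exists_cyl_subset_of_isOpen [TopologicalSpace I] {U : Set (ℕ → I)} (hU : IsOpen U)
    {z : ℕ → I} (hz : z ∈ U) : ∃ n, cyl z n ⊆ U := by
  obtain ⟨F, u, hu, hFu⟩ := isOpen_pi_iff.1 hU z hz
  refine ⟨F.sup id + 1, fun w hw => hFu fun i hi => ?_⟩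
  rw [hw i (Nat.lt_succ_of_le (Finset.le_sup (f := id) hi))]
  exact (hu i hi).2

theorem isClopen_cyl [TopologicalSpace I] [DiscreteTopology I] (x : ℕ → I) (n : ℕ) :
    IsClopen (cyl x n) := by
  rw [cyl_eq_preimage]
  exact (isClopen_discrete _).preimage (continuous_pi fun i => continuous_apply _)

theorem measurableSet_cyl [MeasurableSpace I] [MeasurableSingletonClass I] (x : ℕ → I)
    (n : ℕ) : MeasurableSet (cyl x n) := by
  rw [cyl_eq_preimage]
  exact measurableSet_singleton _ |>.preimage
    (measurable_pi_lambda _ fun i => measurable_pi_apply _)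

theorem measurable_shift [MeasurableSpace I] : Measurable (shift : (ℕ → I) → ℕ → I) :=
  measurable_pi_lambda _ fun i => measurable_pi_apply (i + 1)

theorem abs_birkhoffSum_shift_sub_le {φ : (ℕ → I) → ℝ} {v : ℕ → ℝ}
    (hv : ∀ k x y, (∀ i < k, x i = y i) → |φ x - φ y| ≤ v k) (hv₀ : ∀ k, 0 ≤ v k)
    (hv_sum : Summable v) (n : ℕ) (x y : ℕ → I) (hxy : ∀ i < n, x i = y i) :
    |birkhoffSum shift φ n x - birkhoffSum shift φ n y| ≤ ∑' k, v k := by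
  have hterm : ∀ k ∈ Finset.range n, |φ (shift^[k] x) - φ (shift^[k] y)| ≤ v (n - k) :=
    fun k hk => hv _ _ _ fun i hi => by
      rw [shift_iterate_apply, shift_iterate_apply]
      exact hxy _ (by rw [Finset.mem_range] at hk; omega)
  have hinj : Set.InjOn (n - ·) (Finset.range n) := fun a ha b hb h => by
    simp only [Finset.coe_range, Set.mem_Iio] at ha hb h
    omega
  calc |birkhoffSum shift φ n x - birkhoffSum shift φ n y|
      = |∑ k ∈ Finset.range n, (φ (shift^[k] x) - φ (shift^[k] y))| := by
        rw [birkhoffSum, birkhoffSum, Finset.sum_sub_distrib]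
    _ ≤ ∑ k ∈ Finset.range n, v (n - k) :=
        (Finset.abs_sum_le_sum_abs _ _).trans (Finset.sum_le_sum hterm)
    _ = ∑ j ∈ (Finset.range n).image (n - ·), v j := (Finset.sum_image hinj).symm
    _ ≤ ∑' k, v k := hv_sum.sum_le_tsum _ fun k _ => hv₀ k

theorem birkhoffSum_shift_prepend (φ : (ℕ → I) → ℝ) (x y : ℕ → I) (n m : ℕ) :
    birkhoffSum shift φ (n + m) (prepend x n y) =
      birkhoffSum shift φ n (prepend x n y) + birkhoffSum shift φ m y := by
  rw [birkhoffSum_add, shift_iterate_prepend]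

theorem exp_birkhoffSum_shift_prepend (φ : (ℕ → I) → ℝ) (P : ℝ) (x y : ℕ → I) (n m : ℕ) :
    Real.exp (birkhoffSum shift φ (n + m) (prepend x n y) - ↑(n + m) * P) =
      Real.exp (birkhoffSum shift φ n (prepend x n y) - birkhoffSum shift φ n x) *
        (Real.exp (birkhoffSum shift φ n x - n * P) *
          Real.exp (birkhoffSum shift φ m y - m * P)) := by
  rw [← Real.exp_add, ← Real.exp_add, birkhoffSum_shift_prepend]
  push_cast
  ring_nf

end Cylinders

section Extension

theorem ENNReal.le_ofReal_mul_of_toReal_le {a b : ℝ≥0∞} {K : ℝ} (ha : a ≠ ∞) (hb : b ≠ ∞)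
    (hK : 0 ≤ K) (h : a.toReal ≤ K * b.toReal) : a ≤ ENNReal.ofReal K * b := by
  rwa [← ENNReal.toReal_le_toReal ha (by finiteness), ENNReal.toReal_mul,
    ENNReal.toReal_ofReal hK]

variable {α β : Type*} [MeasurableSpace α]

theorem measure_preimage_le_of_forall_fiber [Countable β] {μ ν : Measure α} {C : ℝ≥0∞}
    {f : α → β} (hf : ∀ b, MeasurableSet (f ⁻¹' {b}))
    (h : ∀ b, ν (f ⁻¹' {b}) ≤ C * μ (f ⁻¹' {b})) (s : Set β) :
    ν (f ⁻¹' s) ≤ C * μ (f ⁻¹' s) := by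
  rw [← tsum_measure_preimage_singleton s.to_countable fun b _ => hf b,
    ← tsum_measure_preimage_singleton s.to_countable fun b _ => hf b,
    ← ENNReal.tsum_mul_left]
  exact ENNReal.tsum_le_tsum fun b => h b

theorem Measure.le_of_forall_isOpen_le [TopologicalSpace α] {μ ν : Measure α}
    [μ.OuterRegular] (h : ∀ U, IsOpen U → ν U ≤ μ U) : ν ≤ μ := fun A => by
  rw [A.measure_eq_iInf_isOpen μ]
  exact le_iInf₂ fun U hAU => le_iInf fun hU => (measure_mono hAU).trans (h U hU)

variable {I : Type*} [MeasurableSpace I] [MeasurableSingletonClass I] [Countable I]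

theorem measure_isOpen_le_of_forall_cyl [TopologicalSpace I] {μ ν : Measure (ℕ → I)}
    {C : ℝ≥0∞} (h : ∀ y m, ν (cyl y m) ≤ C * μ (cyl y m)) {U : Set (ℕ → I)} (hU : IsOpen U) :
    ν U ≤ C * μ U := by
  let π : ∀ n, (ℕ → I) → Fin n → I := fun n z i => z i
  -- `E n` is the union of the depth-`n` cylinders contained in `U`.
  let E : ℕ → Set (ℕ → I) := fun n => π n ⁻¹' {s | π n ⁻¹' {s} ⊆ U}
  have mem_E : ∀ n z, z ∈ E n ↔ cyl z n ⊆ U := fun n z => by rw [cyl_eq_preimage]; rfl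
  have hE_mono : Monotone E := monotone_nat_of_le_succ fun n z hz => by
    rw [mem_E] at hz ⊢
    exact (cyl_subset_cyl z n.le_succ).trans hz
  have hE_union : ⋃ n, E n = U := by
    refine Set.Subset.antisymm (Set.iUnion_subset fun n z hz => ?_) fun z hz => ?_
    · exact (mem_E n z).1 hz (mem_cyl_self z n)
    · obtain ⟨n, hn⟩ := exists_cyl_subset_of_isOpen hU hz
      exact Set.mem_iUnion.2 ⟨n, (mem_E n z).2 hn⟩
  have hfiber : ∀ n (s : Fin n → I), ν (π n ⁻¹' {s}) ≤ C * μ (π n ⁻¹' {s}) := by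
    intro n s
    by_cases hs : s ∈ Set.range (π n)
    · obtain ⟨z, rfl⟩ := hs
      rw [← cyl_eq_preimage]
      exact h z n
    · simp [Set.preimage_singleton_eq_empty.2 hs]
  have hmeas : ∀ n (s : Fin n → I), MeasurableSet (π n ⁻¹' {s}) := fun n s =>
    measurableSet_singleton s |>.preimage
      (measurable_pi_lambda _ fun i => measurable_pi_apply _)
  rw [← hE_union, hE_mono.measure_iUnion, hE_mono.measure_iUnion, ENNReal.mul_iSup]
  exact iSup_mono fun n => measure_preimage_le_of_forall_fiber (hmeas n) (hfiber n) _

variable [TopologicalSpace I] [DiscreteTopology I] [BorelSpace I]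

theorem le_smul_of_forall_cyl {μ ν : Measure (ℕ → I)} [IsFiniteMeasure μ] {C : ℝ≥0∞}
    (hC : C ≠ ∞) (h : ∀ y m, ν (cyl y m) ≤ C * μ (cyl y m)) : ν ≤ C • μ :=
  have : (C • μ).OuterRegular := .smul μ hC
  Measure.le_of_forall_isOpen_le fun _ hU => measure_isOpen_le_of_forall_cyl h hU

theorem inv_mul_le_and_le_mul_of_forall_cyl {μ ν : Measure (ℕ → I)} [IsFiniteMeasure μ]
    [IsFiniteMeasure ν] {C : ℝ≥0∞} (hC₀ : C ≠ 0) (hC : C ≠ ∞)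
    (h : ∀ y m, C⁻¹ * μ (cyl y m) ≤ ν (cyl y m) ∧ ν (cyl y m) ≤ C * μ (cyl y m))
    (A : Set (ℕ → I)) : C⁻¹ * μ A ≤ ν A ∧ ν A ≤ C * μ A := by
  have hνμ := le_smul_of_forall_cyl hC fun y m => (h y m).2
  have hμν := le_smul_of_forall_cyl (μ := ν) (ν := μ) hC fun y m =>
    (ENNReal.inv_mul_le_iff hC₀ hC).1 (h y m).1
  exact ⟨(ENNReal.inv_mul_le_iff hC₀ hC).2 (hμν A), hνμ A⟩

end Extension

section Minimeasures

variable {I : Type*} [MeasurableSpace I] (μ : Measure (ℕ → I))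

theorem miniM_apply (x : ℕ → I) (n : ℕ) {A : Set (ℕ → I)} (hA : MeasurableSet A) :
    miniM μ x n A = μ (prepend x n '' A) / μ (cyl x n) := by
  have hshift : (fun z i => z (i + n)) = (shift^[n] : (ℕ → I) → ℕ → I) :=
    funext fun z => funext fun i => (shift_iterate_apply z n i).symm
  rw [miniM, hshift, Measure.smul_apply, smul_eq_mul,
    Measure.map_apply (measurable_shift.iterate n) hA,
    Measure.restrict_apply (measurable_shift.iterate n hA), Set.inter_comm, ← image_prepend,
    ENNReal.div_eq_inv_mul]

theorem miniM_cyl [MeasurableSingletonClass I] (x y : ℕ → I) (n m : ℕ) :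
    miniM μ x n (cyl y m) = μ (cyl (prepend x n y) (n + m)) / μ (cyl x n) := by
  rw [miniM_apply μ x n (measurableSet_cyl y m), image_prepend_cyl]

variable [IsFiniteMeasure μ]

theorem isProbabilityMeasure_miniM {x : ℕ → I} {n : ℕ} (h : μ (cyl x n) ≠ 0) :
    IsProbabilityMeasure (miniM μ x n) := by
  constructor
  rw [miniM_apply μ x n MeasurableSet.univ, image_prepend, Set.preimage_univ, Set.inter_univ,
    ENNReal.div_self h (measure_ne_top μ _)]

theorem coe_miniP {x : ℕ → I} {n : ℕ} (h : μ (cyl x n) ≠ 0) :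
    (miniP μ x n : Measure (ℕ → I)) = miniM μ x n := by
  have hP := isProbabilityMeasure_miniM μ h
  rw [show miniP μ x n = ⟨miniM μ x n, hP⟩ from dif_pos hP]
  rfl

end Minimeasures

section Gibbs

variable {I : Type*} [MeasurableSpace I]

def IsGibbsMeasure (μ : Measure (ℕ → I)) (φ : (ℕ → I) → ℝ) (P C₁ C₂ : ℝ) : Prop :=
  ∀ x n, C₁ ≤ (μ (cyl x n)).toReal / Real.exp (birkhoffSum shift φ n x - n * P) ∧
    (μ (cyl x n)).toReal / Real.exp (birkhoffSum shift φ n x - n * P) ≤ C₂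

namespace IsGibbsMeasure

variable {μ : Measure (ℕ → I)} {φ : (ℕ → I) → ℝ} {P C₁ C₂ : ℝ}

theorem mul_exp_le (hμ : IsGibbsMeasure μ φ P C₁ C₂) (x : ℕ → I) (n : ℕ) :
    C₁ * Real.exp (birkhoffSum shift φ n x - n * P) ≤ (μ (cyl x n)).toReal :=
  (le_div_iff₀ (Real.exp_pos _)).1 (hμ x n).1

theorem le_mul_exp (hμ : IsGibbsMeasure μ φ P C₁ C₂) (x : ℕ → I) (n : ℕ) :
    (μ (cyl x n)).toReal ≤ C₂ * Real.exp (birkhoffSum shift φ n x - n * P) :=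
  (div_le_iff₀ (Real.exp_pos _)).1 (hμ x n).2

theorem le_one_and_one_le [IsProbabilityMeasure μ] (hμ : IsGibbsMeasure μ φ P C₁ C₂) :
    C₁ ≤ 1 ∧ 1 ≤ C₂ := by
  obtain ⟨x⟩ := nonempty_of_isProbabilityMeasure μ
  have hcyl : cyl x 0 = Set.univ :=
    Set.eq_univ_of_forall fun _ _ hi => (Nat.not_lt_zero _ hi).elim
  simpa [hcyl, birkhoffSum] using hμ x 0

variable [IsProbabilityMeasure μ] {V : ℝ}

theorem toReal_cyl_prepend_le (hμ : IsGibbsMeasure μ φ P C₁ C₂) (hC₁ : 0 < C₁)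
    {x y : ℕ → I} {n : ℕ}
    (hV : |birkhoffSum shift φ n (prepend x n y) - birkhoffSum shift φ n x| ≤ V) (m : ℕ) :
    (μ (cyl (prepend x n y) (n + m))).toReal ≤
      (C₂ / C₁) ^ 2 * Real.exp V * ((μ (cyl x n)).toReal * (μ (cyl y m)).toReal) := by
  have hC₂ : C₂ ≤ C₂ ^ 2 := le_self_pow₀ hμ.le_one_and_one_le.2 two_ne_zero
  calc (μ (cyl (prepend x n y) (n + m))).toReal
      ≤ C₂ * Real.exp (birkhoffSum shift φ (n + m) (prepend x n y) - ↑(n + m) * P) :=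
        hμ.le_mul_exp _ _
    _ ≤ C₂ * (Real.exp V * ((μ (cyl x n)).toReal / C₁ * ((μ (cyl y m)).toReal / C₁))) := by
        rw [exp_birkhoffSum_shift_prepend]
        gcongr
        · exact hμ.le_one_and_one_le.2.trans' zero_le_one
        · exact (le_abs_self _).trans hV
        · exact (le_div_iff₀' hC₁).2 (hμ.mul_exp_le x n)
        · exact (le_div_iff₀' hC₁).2 (hμ.mul_exp_le y m)
    _ = C₂ / C₁ ^ 2 * Real.exp V * ((μ (cyl x n)).toReal * (μ (cyl y m)).toReal) := by ring
    _ ≤ (C₂ / C₁) ^ 2 * Real.exp V * ((μ (cyl x n)).toReal * (μ (cyl y m)).toReal) := by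
        rw [div_pow]
        gcongr

theorem toReal_mul_le_cyl_prepend (hμ : IsGibbsMeasure μ φ P C₁ C₂) (hC₁ : 0 < C₁)
    {x y : ℕ → I} {n : ℕ}
    (hV : |birkhoffSum shift φ n (prepend x n y) - birkhoffSum shift φ n x| ≤ V) (m : ℕ) :
    (μ (cyl x n)).toReal * (μ (cyl y m)).toReal ≤
      (C₂ / C₁) ^ 2 * Real.exp V * (μ (cyl (prepend x n y) (n + m))).toReal := by
  set δ := birkhoffSum shift φ n (prepend x n y) - birkhoffSum shift φ n x
  have hC₁' : C₁ ^ 2 ≤ C₁ := pow_le_of_le_one hC₁.le hμ.le_one_and_one_le.1 two_ne_zero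
  calc (μ (cyl x n)).toReal * (μ (cyl y m)).toReal
      ≤ (C₂ * Real.exp (birkhoffSum shift φ n x - n * P)) *
          (C₂ * Real.exp (birkhoffSum shift φ m y - m * P)) :=
        mul_le_mul (hμ.le_mul_exp x n) (hμ.le_mul_exp y m) ENNReal.toReal_nonneg
          (ENNReal.toReal_nonneg.trans (hμ.le_mul_exp x n))
    _ = C₂ ^ 2 * (Real.exp (-δ) *
          Real.exp (birkhoffSum shift φ (n + m) (prepend x n y) - ↑(n + m) * P)) := by
        rw [exp_birkhoffSum_shift_prepend, ← mul_assoc (Real.exp (-δ)), ← Real.exp_add,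
          neg_add_cancel, Real.exp_zero]
        ring
    _ ≤ C₂ ^ 2 * (Real.exp V * ((μ (cyl (prepend x n y) (n + m))).toReal / C₁)) := by
        gcongr
        · exact (neg_le_abs δ).trans hV
        · exact (le_div_iff₀' hC₁).2 (hμ.mul_exp_le _ _)
    _ = C₂ ^ 2 / C₁ * Real.exp V * (μ (cyl (prepend x n y) (n + m))).toReal := by ring
    _ ≤ (C₂ / C₁) ^ 2 * Real.exp V * (μ (cyl (prepend x n y) (n + m))).toReal := by
        rw [div_pow]
        gcongr

theorem miniM_cyl_bounds [MeasurableSingletonClass I] (hμ : IsGibbsMeasure μ φ P C₁ C₂)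
    (hC₁ : 0 < C₁) (hV : ∀ n (x y : ℕ → I), (∀ i < n, x i = y i) →
      |birkhoffSum shift φ n x - birkhoffSum shift φ n y| ≤ V)
    {x : ℕ → I} {n : ℕ} (hx : μ (cyl x n) ≠ 0) (y : ℕ → I) (m : ℕ) :
    (ENNReal.ofReal ((C₂ / C₁) ^ 2 * Real.exp V))⁻¹ * μ (cyl y m) ≤
        miniM μ x n (cyl y m) ∧
      miniM μ x n (cyl y m) ≤
        ENNReal.ofReal ((C₂ / C₁) ^ 2 * Real.exp V) * μ (cyl y m) := by
  set K := (C₂ / C₁) ^ 2 * Real.exp V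
  have hK : 0 < K := by
    have := hμ.le_one_and_one_le.2
    positivity
  have hδ := hV n (prepend x n y) x fun _ hi => prepend_apply_of_lt hi
  set w := prepend x n y
  have hupper : μ (cyl w (n + m)) ≤ ENNReal.ofReal K * (μ (cyl x n) * μ (cyl y m)) :=
    ENNReal.le_ofReal_mul_of_toReal_le (by finiteness) (by finiteness) hK.le
      (by rw [ENNReal.toReal_mul]; exact hμ.toReal_cyl_prepend_le hC₁ hδ m)
  have hlower : μ (cyl x n) * μ (cyl y m) ≤ ENNReal.ofReal K * μ (cyl w (n + m)) :=
    ENNReal.le_ofReal_mul_of_toReal_le (by finiteness) (by finiteness) hK.le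
      (by rw [ENNReal.toReal_mul]; exact hμ.toReal_mul_le_cyl_prepend hC₁ hδ m)
  rw [miniM_cyl]
  constructor
  · rw [ENNReal.le_div_iff_mul_le (.inl hx) (.inl (measure_ne_top μ _))]
    calc (ENNReal.ofReal K)⁻¹ * μ (cyl y m) * μ (cyl x n)
        = (ENNReal.ofReal K)⁻¹ * (μ (cyl x n) * μ (cyl y m)) := by ring
      _ ≤ μ (cyl w (n + m)) :=
        (ENNReal.inv_mul_le_iff (by simpa using hK) ENNReal.ofReal_ne_top).2 hlower
  · rw [ENNReal.div_le_iff hx (measure_ne_top μ _)]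
    exact hupper.trans_eq (by ring)

end IsGibbsMeasure

end Gibbs

theorem gibbs_micromeasures_uniformly_equivalent_general
    {I : Type*} [Fintype I] [MeasurableSpace I]
    [TopologicalSpace I] [DiscreteTopology I] [BorelSpace I]
    (φ : (ℕ → I) → ℝ) (Pφ : ℝ)
    (hHolder : ∃ c : ℝ, 0 ≤ c ∧ ∃ θ ∈ Set.Ioo (0 : ℝ) 1, ∀ (k : ℕ) (x y : ℕ → I),
      (∀ i < k, x i = y i) → |φ x - φ y| ≤ c * θ ^ k)
    (μ : Measure (ℕ → I)) [IsProbabilityMeasure μ]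
    (hfull : ∀ (x : ℕ → I) (n : ℕ), 0 < μ (cyl x n))
    (C₁ C₂ : ℝ) (hC₁ : 0 < C₁)
    (hGibbs : ∀ (x : ℕ → I) (n : ℕ),
      C₁ ≤ (μ (cyl x n)).toReal /
          Real.exp ((∑ k ∈ Finset.range n, φ (shift^[k] x)) - n * Pφ) ∧
      (μ (cyl x n)).toReal /
          Real.exp ((∑ k ∈ Finset.range n, φ (shift^[k] x)) - n * Pφ) ≤ C₂) :
    ∃ C : ℝ≥0∞, 1 ≤ C ∧ C ≠ ∞ ∧
      (∀ (x : ℕ → I) (n : ℕ) (A : Set (ℕ → I)), MeasurableSet A →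
        C⁻¹ * μ A ≤ μ (prepend x n '' A) / μ (cyl x n) ∧
        μ (prepend x n '' A) / μ (cyl x n) ≤ C * μ A) ∧
      ∀ ν : ProbabilityMeasure (ℕ → I),
        (∃ (x : ℕ → I) (nj : ℕ → ℕ), StrictMono nj ∧
          Tendsto (fun j => miniP μ x (nj j)) atTop (𝓝 ν)) →
        ∀ A : Set (ℕ → I), MeasurableSet A →
          C⁻¹ * μ A ≤ (ν : Measure (ℕ → I)) A ∧ (ν : Measure (ℕ → I)) A ≤ C * μ A := by
  have hμ : IsGibbsMeasure μ φ Pφ C₁ C₂ := hGibbs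
  obtain ⟨c, hc, θ, ⟨hθ₀, hθ₁⟩, hφ⟩ := hHolder
  set V := ∑' k, c * θ ^ k
  have hV : 0 ≤ V := tsum_nonneg fun k => by positivity
  have hdist := abs_birkhoffSum_shift_sub_le hφ (fun k => by positivity)
    ((summable_geometric_of_lt_one hθ₀.le hθ₁).mul_left c)
  set C := ENNReal.ofReal ((C₂ / C₁) ^ 2 * Real.exp V)
  have hC : 1 ≤ C := ENNReal.one_le_ofReal.2 <| one_le_mul_of_one_le_of_one_le
    (one_le_pow₀ ((one_le_div hC₁).2 (hμ.le_one_and_one_le.1.trans hμ.le_one_and_one_le.2)))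
    (Real.one_le_exp hV)
  have hC₀ : C ≠ 0 := (zero_lt_one.trans_le hC).ne'
  have hmini : ∀ x n A, C⁻¹ * μ A ≤ miniM μ x n A ∧ miniM μ x n A ≤ C * μ A := fun x n =>
    have := isProbabilityMeasure_miniM μ (hfull x n).ne'
    inv_mul_le_and_le_mul_of_forall_cyl hC₀ ENNReal.ofReal_ne_top
      (hμ.miniM_cyl_bounds hC₁ hdist (hfull x n).ne')
  refine ⟨C, hC, ENNReal.ofReal_ne_top,
    fun x n A hA => miniM_apply μ x n hA ▸ hmini x n A, ?_⟩
  rintro ν ⟨x, nj, -, hlim⟩ A -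
  refine inv_mul_le_and_le_mul_of_forall_cyl hC₀ ENNReal.ofReal_ne_top (fun y m => ?_) A
  have hcyl := ProbabilityMeasure.tendsto_measure_of_null_frontier_of_tendsto' hlim
    (E := cyl y m) (by simp [(isClopen_cyl y m).frontier_eq])
  refine isClosed_Icc.mem_of_tendsto hcyl (Eventually.of_forall fun j => ?_)
  rw [coe_miniP μ (hfull x (nj j)).ne']
  exact hmini x (nj j) (cyl y m)

/-- For a fully supported Gibbs measure `μ` of a Hölder potential, there is a uniform
constant `C ≥ 1` such that every minimeasure, and hence also every micromeasure
(weak-* limit of minimeasures along a subsequence), is `C`-uniformly equivalent to `μ`. -/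
theorem gibbs_micromeasures_uniformly_equivalent
    {I : Type*} [Fintype I] [Nonempty I] [MeasurableSpace I]
    [TopologicalSpace I] [DiscreteTopology I] [BorelSpace I]
    (φ : (ℕ → I) → ℝ) (Pφ : ℝ)
    (hHolder : ∃ c : ℝ, 0 ≤ c ∧ ∃ θ ∈ Set.Ioo (0 : ℝ) 1, ∀ (k : ℕ) (x y : ℕ → I),
      (∀ i < k, x i = y i) → |φ x - φ y| ≤ c * θ ^ k)
    (μ : Measure (ℕ → I)) [IsProbabilityMeasure μ]
    (hfull : ∀ (x : ℕ → I) (n : ℕ), 0 < μ (cyl x n))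
    (C₁ C₂ : ℝ) (hC₁ : 0 < C₁) (hC₂ : 0 < C₂)
    (hGibbs : ∀ (x : ℕ → I) (n : ℕ),
      C₁ ≤ (μ (cyl x n)).toReal /
          Real.exp ((∑ k ∈ Finset.range n, φ (shift^[k] x)) - n * Pφ) ∧
      (μ (cyl x n)).toReal /
          Real.exp ((∑ k ∈ Finset.range n, φ (shift^[k] x)) - n * Pφ) ≤ C₂) :
    ∃ C : ℝ≥0∞, 1 ≤ C ∧ C ≠ ∞ ∧
      (∀ (x : ℕ → I) (n : ℕ) (A : Set (ℕ → I)), MeasurableSet A →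
        C⁻¹ * μ A ≤ μ (prepend x n '' A) / μ (cyl x n) ∧
        μ (prepend x n '' A) / μ (cyl x n) ≤ C * μ A) ∧
      ∀ ν : ProbabilityMeasure (ℕ → I),
        (∃ (x : ℕ → I) (nj : ℕ → ℕ), StrictMono nj ∧
          Tendsto (fun j => miniP μ x (nj j)) atTop (𝓝 ν)) →
        ∀ A : Set (ℕ → I), MeasurableSet A →
          C⁻¹ * μ A ≤ (ν : Measure (ℕ → I)) A ∧ (ν : Measure (ℕ → I)) A ≤ C * μ A :=
  gibbs_micromeasures_uniformly_equivalent_general φ Pφ hHolder μ hfull C₁ C₂ hC₁ hGibbs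
end
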